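/- arXiv:2409.09807 — 9 statements merged into one kernel-verified Lean document; each statement's English description precedes it below -/
import Mathlib

section
/- In the Z-module Z ⊕ Z, the submodule N = 2Z ⊕ 2Z is a prime submodule but is not strongly irreducible. -/
/-!
Primality of the ideal `2ℤ` passes to `2ℤ × 2ℤ` one coordinate at a time. Strong irreducibility
fails because the two axes `ℤ × 0` and `0 × ℤ` meet in `0 ⊆ N` while neither lies in `N`.
-/

namespace Submodule

variable {R M M₁ M₂ : Type*}

section Semiring

variable [Semiring R] [AddCommMonoid M] [Module R M]

/-- `∀ x, a • x ∈ N` says that `a` lies in the colon ideal `(N : M)`. -/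
def IsPrime (N : Submodule R M) : Prop :=
  N ≠ ⊤ ∧ ∀ (a : R) (m : M), a • m ∈ N → (∀ x : M, a • x ∈ N) ∨ m ∈ N

def IsStronglyIrreducible (N : Submodule R M) : Prop :=
  ∀ K L : Submodule R M, K ⊓ L ≤ N → K ≤ N ∨ L ≤ N

theorem IsPrime.prod_self {N : Submodule R M} (hN : N.IsPrime) : (N.prod N).IsPrime := by
  obtain ⟨hN_ne_top, hN_prime⟩ := hN
  refine ⟨fun h ↦ hN_ne_top ((prod_eq_top_iff R M M).mp h).1, fun a m ham ↦ ?_⟩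
  obtain ⟨ham₁, ham₂⟩ := mem_prod.mp ham
  rcases hN_prime a m.1 ham₁ with ha | hm₁
  · exact .inl fun x ↦ mem_prod.mpr ⟨ha x.1, ha x.2⟩
  · rcases hN_prime a m.2 ham₂ with ha | hm₂
    · exact .inl fun x ↦ mem_prod.mpr ⟨ha x.1, ha x.2⟩
    · exact .inr (mem_prod.mpr ⟨hm₁, hm₂⟩)

variable [AddCommMonoid M₁] [AddCommMonoid M₂] [Module R M₁] [Module R M₂]

theorem prod_top_bot_inf_prod_bot_top :
    (prod ⊤ ⊥ : Submodule R (M₁ × M₂)) ⊓ prod ⊥ ⊤ = ⊥ := by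
  ext ⟨x, y⟩
  simp

theorem not_isStronglyIrreducible_prod {p : Submodule R M₁} {q : Submodule R M₂}
    (hp : p ≠ ⊤) (hq : q ≠ ⊤) : ¬ (p.prod q).IsStronglyIrreducible := by
  intro h
  rcases h _ _ ((prod_top_bot_inf_prod_bot_top (R := R)).trans_le bot_le) with hK | hL
  · refine hp (eq_top_iff.mpr fun x _ ↦ ?_)
    have hx : (x, (0 : M₂)) ∈ p.prod q := hK (mem_prod.mpr ⟨mem_top, zero_mem _⟩)
    exact (mem_prod.mp hx).1
  · refine hq (eq_top_iff.mpr fun y _ ↦ ?_)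
    have hy : ((0 : M₁), y) ∈ p.prod q := hL (mem_prod.mpr ⟨zero_mem _, mem_top⟩)
    exact (mem_prod.mp hy).2

end Semiring

theorem isPrime_of_isPrime_ideal [CommSemiring R] {P : Ideal R} (hP : P.IsPrime) :
    Submodule.IsPrime P :=
  ⟨hP.ne_top, fun _ _ ham ↦ (hP.mem_or_mem ham).imp (fun ha x ↦ P.mul_mem_right x ha) id⟩

end Submodule

/-- In the `ℤ`-module `ℤ × ℤ`, the submodule `N = 2ℤ × 2ℤ` is a prime submodule
but is not strongly irreducible. -/
theorem prime_not_strongly_irreducible_example :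
    letI N : Submodule ℤ (ℤ × ℤ) :=
      Submodule.prod (Ideal.span {(2 : ℤ)}) (Ideal.span {(2 : ℤ)})
    -- N is a prime submodule
    (N ≠ ⊤ ∧ ∀ (a : ℤ) (m : ℤ × ℤ), a • m ∈ N → (∀ x : ℤ × ℤ, a • x ∈ N) ∨ m ∈ N) ∧
    -- N is not strongly irreducible
    ¬ (∀ K L : Submodule ℤ (ℤ × ℤ), K ⊓ L ≤ N → K ≤ N ∨ L ≤ N) := by
  have two_prime : (Ideal.span {(2 : ℤ)}).IsPrime :=
    (Ideal.span_singleton_prime two_ne_zero).mpr Int.prime_two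
  exact ⟨(Submodule.isPrime_of_isPrime_ideal two_prime).prod_self,
    Submodule.not_isStronglyIrreducible_prod two_prime.ne_top two_prime.ne_top⟩
end

section
/- Let M be a finitely generated R-module. Then M satisfies the finite coprime condition if and only if every maximal submodule of M is strongly irreducible. -/
/-!
A maximal submodule `P` is strongly irreducible exactly when `P ⊔ K = M` and `P ⊔ L = M` force
`P ⊔ (K ⊓ L) = M`, so the finite coprime condition at `N = P` is strong irreducibility of `P`.
Conversely, if `N ⊔ (K₁ ⊓ K₂) ≠ M`, then, `M` being finitely generated, it lies in a maximal
submodule `P`; strong irreducibility puts `K₁` or `K₂` inside `P`, and with `N ≤ P` this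
contradicts `N ⊔ K₁ = M` or `N ⊔ K₂ = M`.
-/

section Lattice

variable {α : Type*} [Lattice α] [BoundedOrder α]

theorem IsCoatom.infPrime_of_forall_codisjoint_inf
    (h : ∀ a b c : α, Codisjoint a b → Codisjoint a c → Codisjoint a (b ⊓ c))
    {p : α} (hp : IsCoatom p) : InfPrime p := by
  refine ⟨hp.lt_top.not_isMax, fun b c hbc => ?_⟩
  by_contra! hnot
  exact hp.not_codisjoint_iff_le.mpr hbc <|
    h p b c (hp.not_le_iff_codisjoint.mp hnot.1) (hp.not_le_iff_codisjoint.mp hnot.2)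

theorem Codisjoint.inf_right_of_forall_isCoatom_infPrime [IsCoatomic α]
    (h : ∀ p : α, IsCoatom p → InfPrime p) {a b c : α}
    (hab : Codisjoint a b) (hac : Codisjoint a c) : Codisjoint a (b ⊓ c) := by
  rw [codisjoint_iff]
  by_contra hne
  obtain ⟨p, hp, hle⟩ := (eq_top_or_exists_le_coatom (a ⊔ b ⊓ c)).resolve_left hne
  have hap : a ≤ p := le_sup_left.trans hle
  rcases (h p hp).2 (le_sup_right.trans hle) with hbp | hcp
  · exact hp.ne_top (codisjoint_self.mp (hab.mono hap hbp))
  · exact hp.ne_top (codisjoint_self.mp (hac.mono hap hcp))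

theorem forall_codisjoint_inf_iff_forall_isCoatom_infPrime [IsCoatomic α] :
    (∀ a b c : α, Codisjoint a b → Codisjoint a c → Codisjoint a (b ⊓ c)) ↔
      ∀ p : α, IsCoatom p → InfPrime p :=
  ⟨fun h _ hp => hp.infPrime_of_forall_codisjoint_inf h,
    fun h _ _ _ => Codisjoint.inf_right_of_forall_isCoatom_infPrime h⟩

end Lattice

theorem finite_coprime_iff_maximal_strongly_irreducible_general
    {R M : Type*} [CommRing R] [AddCommGroup M] [Module R M]
    [Module.Finite R M] :
    (∀ N K₁ K₂ : Submodule R M, N ⊔ K₁ = ⊤ → N ⊔ K₂ = ⊤ → N ⊔ (K₁ ⊓ K₂) = ⊤) ↔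
    (∀ P : Submodule R M, IsCoatom P → ∀ K L : Submodule R M, K ⊓ L ≤ P → K ≤ P ∨ L ≤ P) := by
  have key := forall_codisjoint_inf_iff_forall_isCoatom_infPrime (α := Submodule R M)
  simp only [codisjoint_iff] at key
  rw [key]
  exact forall₂_congr fun P hP => ⟨fun h K L => @h.2 K L, fun h => ⟨hP.lt_top.not_isMax, h⟩⟩

/-- For a finitely generated module, the finite coprime condition holds
iff every maximal submodule is strongly irreducible. -/
theorem finite_coprime_iff_maximal_strongly_irreducible
    {R M : Type*} [CommRing R] [AddCommGroup M] [Module R M] [Nontrivial M]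
    [Module.Finite R M] :
    (∀ N K₁ K₂ : Submodule R M, N ⊔ K₁ = ⊤ → N ⊔ K₂ = ⊤ → N ⊔ (K₁ ⊓ K₂) = ⊤) ↔
    (∀ P : Submodule R M, IsCoatom P → ∀ K L : Submodule R M, K ⊓ L ≤ P → K ≤ P ∨ L ≤ P) :=
  finite_coprime_iff_maximal_strongly_irreducible_general
end

section
/- Let M be a meet irreducible finitely generated R-module all of whose maximal submodules are strongly irreducible. Then the family B_M of coprime cosets m + N, where m ∈ M and N is a nonzero submodule with N + Rm = M, is the basis for a topology on M. -/
open Pointwise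

/-!
Two coprime cosets through a common point `x` can both be recentred at `x`, and then their
intersection is the coset of `N₁ ⊓ N₂` at `x`. This submodule is nonzero by meet
irreducibility, and it is coprime to `x`: a maximal submodule containing `(N₁ ⊓ N₂) ⊔ Rx`
would, being strongly irreducible, contain one of the `Nᵢ ⊔ Rx = M`.
-/

theorem inf_sup_eq_top_of_sup_eq_top {α : Type*} [Lattice α] [OrderTop α] [IsCoatomic α]
    (hsi : ∀ p : α, IsCoatom p → ∀ a b : α, a ⊓ b ≤ p → a ≤ p ∨ b ≤ p)
    {a b c : α} (ha : a ⊔ c = ⊤) (hb : b ⊔ c = ⊤) : a ⊓ b ⊔ c = ⊤ := by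
  refine (eq_top_or_exists_le_coatom (a ⊓ b ⊔ c)).resolve_right ?_
  rintro ⟨p, hp, hle⟩
  have hcp : c ≤ p := le_sup_right.trans hle
  rcases hsi p hp a b (le_sup_left.trans hle) with hap | hbp
  · exact hp.1 (top_le_iff.mp (ha ▸ sup_le hap hcp))
  · exact hp.1 (top_le_iff.mp (hb ▸ sup_le hbp hcp))

namespace Submodule

variable {R M : Type*} [Ring R] [AddCommGroup M] [Module R M]

theorem mem_vadd_coe_iff {N : Submodule R M} {m x : M} :
    x ∈ m +ᵥ (N : Set M) ↔ x - m ∈ N := by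
  change x ∈ m +ᵥ (N.toAddSubgroup : Set M) ↔ _
  rw [mem_leftAddCoset_iff, neg_add_eq_sub, SetLike.mem_coe, mem_toAddSubgroup]

theorem vadd_coe_eq_of_mem {N : Submodule R M} {m x : M} (hx : x ∈ m +ᵥ (N : Set M)) :
    x +ᵥ (N : Set M) = m +ᵥ (N : Set M) := by
  have hxm : x - m ∈ N.toAddSubgroup := mem_vadd_coe_iff.mp hx
  change x +ᵥ (N.toAddSubgroup : Set M) = m +ᵥ (N.toAddSubgroup : Set M)
  rw [← add_sub_cancel m x, ← vadd_vadd, leftAddCoset_mem_leftAddCoset _ hxm]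

theorem sup_span_singleton_eq_of_sub_mem {N : Submodule R M} {m x : M} (h : x - m ∈ N) :
    N ⊔ span R {x} = N ⊔ span R {m} := by
  have le_of_sub_mem : ∀ {y z : M}, y - z ∈ N → N ⊔ span R {y} ≤ N ⊔ span R {z} :=
    fun {y z} hyz ↦ sup_le le_sup_left <| (span_singleton_le_iff_mem _ _).mpr <| by
      simpa using add_mem (mem_sup_left hyz) (mem_sup_right (mem_span_singleton_self z))
  exact le_antisymm (le_of_sub_mem h) (le_of_sub_mem (by simpa using neg_mem h))

end Submodule

section CoprimeCosets

open Submodule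

variable (R M : Type*) [Ring R] [AddCommGroup M] [Module R M]

def coprimeCosets : Set (Set M) :=
  {S | ∃ (m : M) (N : Submodule R M),
    N ≠ ⊥ ∧ N ⊔ span R {m} = ⊤ ∧ S = m +ᵥ (N : Set M)}

variable {R M}

theorem sUnion_coprimeCosets [Nontrivial M] : ⋃₀ coprimeCosets R M = Set.univ :=
  Set.eq_univ_of_forall fun _ ↦
    ⟨(0 : M) +ᵥ ((⊤ : Submodule R M) : Set M), ⟨0, ⊤, top_ne_bot, top_sup_eq _, rfl⟩,
      mem_vadd_coe_iff.mpr mem_top⟩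

theorem exists_coprimeCoset_subset_inter [IsCoatomic (Submodule R M)]
    (hmi : ∀ K L : Submodule R M, K ≠ ⊥ → L ≠ ⊥ → K ⊓ L ≠ ⊥)
    (hsi : ∀ P : Submodule R M, IsCoatom P →
      ∀ K L : Submodule R M, K ⊓ L ≤ P → K ≤ P ∨ L ≤ P)
    {t₁ t₂ : Set M} (ht₁ : t₁ ∈ coprimeCosets R M) (ht₂ : t₂ ∈ coprimeCosets R M)
    {x : M} (hx : x ∈ t₁ ∩ t₂) :
    ∃ t₃ ∈ coprimeCosets R M, x ∈ t₃ ∧ t₃ ⊆ t₁ ∩ t₂ := by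
  obtain ⟨m₁, N₁, hN₁, hc₁, rfl⟩ := ht₁
  obtain ⟨m₂, N₂, hN₂, hc₂, rfl⟩ := ht₂
  obtain ⟨hx₁, hx₂⟩ := hx
  have hcx₁ : N₁ ⊔ span R {x} = ⊤ :=
    (sup_span_singleton_eq_of_sub_mem (mem_vadd_coe_iff.mp hx₁)).trans hc₁
  have hcx₂ : N₂ ⊔ span R {x} = ⊤ :=
    (sup_span_singleton_eq_of_sub_mem (mem_vadd_coe_iff.mp hx₂)).trans hc₂
  refine ⟨x +ᵥ ((N₁ ⊓ N₂ : Submodule R M) : Set M),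
    ⟨x, N₁ ⊓ N₂, hmi _ _ hN₁ hN₂, inf_sup_eq_top_of_sup_eq_top hsi hcx₁ hcx₂, rfl⟩,
    mem_vadd_coe_iff.mpr (by simp), Set.subset_inter ?_ ?_⟩
  · rw [← vadd_coe_eq_of_mem hx₁]
    exact Set.vadd_set_mono inf_le_left
  · rw [← vadd_coe_eq_of_mem hx₂]
    exact Set.vadd_set_mono inf_le_right

end CoprimeCosets

/-- If `M` is a meet irreducible finitely generated module all of whose maximal
submodules are strongly irreducible, then the family of coprime cosets is a basis
for a topology on `M`. -/
theorem coprime_cosets_isBasis_of_fg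
    {R M : Type*} [CommRing R] [AddCommGroup M] [Module R M] [Nontrivial M]
    [Module.Finite R M]
    (hmi : ∀ K L : Submodule R M, K ≠ ⊥ → L ≠ ⊥ → K ⊓ L ≠ ⊥)
    (hsi : ∀ P : Submodule R M, IsCoatom P →
      ∀ K L : Submodule R M, K ⊓ L ≤ P → K ≤ P ∨ L ≤ P) :
    letI B : Set (Set M) := {S | ∃ (m : M) (N : Submodule R M),
      N ≠ ⊥ ∧ N ⊔ Submodule.span R {m} = ⊤ ∧ S = m +ᵥ (N : Set M)}
    @TopologicalSpace.IsTopologicalBasis M (TopologicalSpace.generateFrom B) B :=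
  @TopologicalSpace.IsTopologicalBasis.mk M (TopologicalSpace.generateFrom _)
    (coprimeCosets R M)
    (fun _ ht₁ _ ht₂ _ hx ↦ exists_coprimeCoset_subset_inter hmi hsi ht₁ ht₂ hx)
    sUnion_coprimeCosets rfl
end

section
/- In the Z-module M = Z ⊕ Z, the family B_M of coprime cosets fails the basis intersection criterion: with N₁ = Z ⊕ 0, N₂ = 0 ⊕ Z and m₁ = m₂ = (1,1), the intersection (m₁ + N₁) ∩ (m₂ + N₂) = {(1,1)}, and there is no nonzero submodule K of M with (1,1) + K ⊆ (m₁ + N₁) ∩ (m₂ + N₂). -/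
open Pointwise

/-! Translation by `m` is a bijection, so it commutes with intersections and reflects inclusions.
Hence the two cosets meet in the coset of `N₁ ⊓ N₂ = ⊥`, i.e. in `{m}`, and a coset `m + K` inside
it forces `K ≤ N₁ ⊓ N₂ = ⊥`. -/

namespace Submodule

theorem prod_top_bot_inf_prod_bot_top_s6 {R M M' : Type*} [Semiring R] [AddCommMonoid M]
    [Module R M] [AddCommMonoid M'] [Module R M'] :
    (prod ⊤ ⊥ : Submodule R (M × M')) ⊓ prod ⊥ ⊤ = ⊥ := by
  rw [prod_inf_prod, top_inf_eq, bot_inf_eq, prod_bot]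

variable {R M : Type*} [Semiring R] [AddCommGroup M] [Module R M]

theorem vadd_coe_inter_vadd_coe (m : M) (N₁ N₂ : Submodule R M) :
    (m +ᵥ (N₁ : Set M)) ∩ (m +ᵥ (N₂ : Set M)) = m +ᵥ ((N₁ ⊓ N₂ : Submodule R M) : Set M) := by
  rw [coe_inf, Set.vadd_set_inter]

theorem vadd_coe_subset_vadd_coe_iff (m : M) (K N : Submodule R M) :
    m +ᵥ (K : Set M) ⊆ m +ᵥ (N : Set M) ↔ K ≤ N :=
  Set.vadd_set_subset_vadd_set_iff

theorem vadd_coe_bot (m : M) : m +ᵥ ((⊥ : Submodule R M) : Set M) = {m} := by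
  rw [bot_coe, Set.vadd_set_singleton, vadd_eq_add, add_zero]

end Submodule

/-- In the `ℤ`-module `ℤ × ℤ`, the family of coprime cosets fails the basis
intersection criterion. -/
theorem zxz_coprime_cosets_fail_basis :
    letI N₁ : Submodule ℤ (ℤ × ℤ) := Submodule.prod ⊤ ⊥
    letI N₂ : Submodule ℤ (ℤ × ℤ) := Submodule.prod ⊥ ⊤
    ((((1 : ℤ), (1 : ℤ)) +ᵥ (N₁ : Set (ℤ × ℤ))) ∩
      (((1 : ℤ), (1 : ℤ)) +ᵥ (N₂ : Set (ℤ × ℤ))) = {((1 : ℤ), (1 : ℤ))}) ∧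
    ¬ ∃ K : Submodule ℤ (ℤ × ℤ), K ≠ ⊥ ∧
      (((1 : ℤ), (1 : ℤ)) +ᵥ (K : Set (ℤ × ℤ))) ⊆
        ((((1 : ℤ), (1 : ℤ)) +ᵥ (N₁ : Set (ℤ × ℤ))) ∩
          (((1 : ℤ), (1 : ℤ)) +ᵥ (N₂ : Set (ℤ × ℤ)))) := by
  rw [Submodule.vadd_coe_inter_vadd_coe, Submodule.prod_top_bot_inf_prod_bot_top_s6]
  refine ⟨Submodule.vadd_coe_bot _, ?_⟩
  rintro ⟨K, hK, hsub⟩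
  exact hK (le_bot_iff.mp ((Submodule.vadd_coe_subset_vadd_coe_iff _ K ⊥).mp hsub))
end

section
/- If M is an R-module that is not simple and m ∈ J(M) (the Jacobson radical of M), then for every coprime coset n + N ∈ B_M (N nonzero, N + Rn = M) containing m, necessarily N = M; i.e., the only basic open neighborhood of m in the Golomb topology is M itself, provided M is finitely generated. -/
open Pointwise

/-!
Writing `m = n + x` with `x ∈ N`, also `N + Rm = M`. Since `M` is finitely generated, a proper
`N` would lie in a maximal submodule, which also contains `m ∈ J(M)` and hence all of `M`.
-/

theorem eq_top_of_sup_eq_top_of_le_sInf_isCoatom {α : Type*} [CompleteLattice α] [IsCoatomic α]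
    {a b : α} (hb : b ≤ sInf {c | IsCoatom c}) (hab : a ⊔ b = ⊤) : a = ⊤ := by
  obtain ha | ⟨c, hc, hac⟩ := eq_top_or_exists_le_coatom a
  · exact ha
  · have hbc : b ≤ c := hb.trans (sInf_le hc)
    exact absurd (top_le_iff.mp (hab ▸ sup_le hac hbc)) hc.ne_top

namespace Submodule

variable {R M : Type*} [Ring R] [AddCommGroup M] [Module R M]

theorem sup_span_singleton_le_of_sub_mem {N : Submodule R M} {y z : M} (h : y - z ∈ N) :
    N ⊔ R ∙ y ≤ N ⊔ R ∙ z := by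
  refine sup_le le_sup_left (span_singleton_le_iff_mem _ _ |>.mpr ?_)
  simpa using add_mem (mem_sup_left h) (mem_sup_right (mem_span_singleton_self z))

end Submodule

theorem jacobson_mem_only_basic_nbhd_top_general
    {R M : Type*} [CommRing R] [AddCommGroup M] [Module R M]
    [Module.Finite R M]
    (m : M) (hm : m ∈ sInf {P : Submodule R M | IsCoatom P})
    (n : M) (N : Submodule R M)
    (hcop : N ⊔ Submodule.span R {n} = ⊤)
    (hmem : m ∈ n +ᵥ (N : Set M)) : N = ⊤ := by
  obtain ⟨x, hx, rfl⟩ := hmem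
  refine eq_top_of_sup_eq_top_of_le_sInf_isCoatom (b := Submodule.span R {n + x}) ?_ ?_
  · exact (Submodule.span_singleton_le_iff_mem _ _).mpr hm
  · have hsub : n - (n + x) ∈ N := by simpa using N.neg_mem hx
    exact top_unique (hcop ▸ Submodule.sup_span_singleton_le_of_sub_mem hsub)

/-- If `M` is finitely generated and not simple, and `m` lies in the Jacobson
radical of `M`, then the only coprime coset containing `m` is `M` itself. -/
theorem jacobson_mem_only_basic_nbhd_top
    {R M : Type*} [CommRing R] [AddCommGroup M] [Module R M] [Nontrivial M]
    [Module.Finite R M] (hns : ¬ IsSimpleModule R M)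
    (m : M) (hm : m ∈ sInf {P : Submodule R M | IsCoatom P})
    (n : M) (N : Submodule R M) (hN : N ≠ ⊥)
    (hcop : N ⊔ Submodule.span R {n} = ⊤)
    (hmem : m ∈ n +ᵥ (N : Set M)) : N = ⊤ :=
  jacobson_mem_only_basic_nbhd_top_general m hm n N hcop hmem
end

section
/- Let M be a finitely generated meet irreducible R-module satisfying the finite coprime condition, not simple, equipped with the topology generated by the basis B_M of coprime cosets. Then a point m ∈ M is an indiscrete point (its only open neighborhood is M) if and only if m ∈ J(M). -/
open Pointwise Set Topology

/-!
A point lies only in the open set `M` exactly when every basic coset `x + N` through it is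
all of `M`. If `m ∈ J(M)`, a coset `x + N` through `m` satisfies `N + Rm = N + Rx = M`, and
elements of `J(M)` are non-generators, so `N = M`. If `m ∉ P` for a maximal submodule `P`,
then `m + P` is a basic coset (`P ≠ 0` since `M` is not simple) through `m` which misses `0`.
-/

theorem TopologicalSpace.forall_isOpen_generateFrom_eq_univ_iff {α : Type*}
    {g : Set (Set α)} {a : α} :
    (∀ U : Set α, IsOpen[generateFrom g] U → a ∈ U → U = univ) ↔
      ∀ s ∈ g, a ∈ s → s = univ := by
  refine ⟨fun h s hs ↦ h s (.basic s hs), fun h U hU ha ↦ ?_⟩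
  induction hU with
  | basic s hs => exact h s hs ha
  | univ => rfl
  | inter U V _ _ ihU ihV => rw [ihU ha.1, ihV ha.2, univ_inter]
  | sUnion S _ ih =>
    obtain ⟨s, hs, has⟩ := ha
    exact eq_univ_of_univ_subset (ih s hs has ▸ subset_sUnion_of_mem hs)

namespace Submodule

variable {R M : Type*} [Ring R] [AddCommGroup M] [Module R M]

variable (R M) in
/-- The basis `B_M` of the topology `G̃(M)`. -/
def coprimeCosets : Set (Set M) :=
  {S | ∃ (x : M) (N : Submodule R M),
    N ≠ ⊥ ∧ N ⊔ Submodule.span R {x} = ⊤ ∧ S = x +ᵥ (N : Set M)}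

theorem sup_span_singleton_eq_top_of_isCoatom {P : Submodule R M} {m : M}
    (hP : IsCoatom P) (hm : m ∉ P) : P ⊔ span R {m} = ⊤ :=
  codisjoint_iff.mp <| hP.not_le_iff_codisjoint.mp <| by
    rwa [span_singleton_le_iff_mem]

theorem sup_span_singleton_eq_top_of_mem_vadd {N : Submodule R M} {x m : M}
    (hx : N ⊔ span R {x} = ⊤) (hm : m ∈ x +ᵥ (N : Set M)) : N ⊔ span R {m} = ⊤ := by
  obtain ⟨n, hn, hnm⟩ := hm
  refine top_unique (hx ▸ sup_le le_sup_left ?_)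
  rw [span_singleton_le_iff_mem, eq_sub_of_add_eq hnm]
  exact sub_mem (mem_sup_right (mem_span_singleton_self _)) (mem_sup_left hn)

theorem eq_top_of_sup_span_singleton_eq_top [IsCoatomic (Submodule R M)]
    {N : Submodule R M} {m : M} (hm : m ∈ Module.jacobson R M)
    (h : N ⊔ span R {m} = ⊤) : N = ⊤ := by
  have hJ : Module.jacobson R M = Order.radical (Submodule R M) := sInf_eq_iInf
  refine Order.radical_nongenerating (top_unique (h ▸ sup_le_sup_left ?_ N))
  rwa [span_singleton_le_iff_mem, ← hJ]

theorem ne_bot_of_isCoatom (hns : ¬IsSimpleModule R M) {P : Submodule R M}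
    (hP : IsCoatom P) : P ≠ ⊥ := by
  rintro rfl
  exact hns ((isSimpleModule_iff R M).mpr (isSimpleOrder_iff_isCoatom_bot.mpr hP))

theorem eq_univ_of_mem_coprimeCosets [IsCoatomic (Submodule R M)] {m : M}
    (hm : m ∈ Module.jacobson R M) {S : Set M} (hS : S ∈ coprimeCosets R M) (hmS : m ∈ S) :
    S = univ := by
  obtain ⟨x, N, -, hx, rfl⟩ := hS
  rw [eq_top_of_sup_span_singleton_eq_top hm (sup_span_singleton_eq_top_of_mem_vadd hx hmS),
    top_coe, vadd_set_univ]

theorem mem_jacobson_of_forall_coprimeCosets (hns : ¬IsSimpleModule R M) {m : M}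
    (h : ∀ S ∈ coprimeCosets R M, m ∈ S → S = univ) : m ∈ Module.jacobson R M := by
  refine mem_sInf.mpr fun P hP ↦ by_contra fun hmP ↦ hP.1 ?_
  have hcoset : m +ᵥ (P : Set M) ∈ coprimeCosets R M :=
    ⟨m, P, ne_bot_of_isCoatom hns hP, sup_span_singleton_eq_top_of_isCoatom hP hmP, rfl⟩
  have hm : m ∈ m +ᵥ (P : Set M) := ⟨0, P.zero_mem, add_zero m⟩
  rw [← coe_eq_univ, ← vadd_set_eq_univ (a := m)]
  exact h _ hcoset hm

end Submodule

theorem indiscrete_points_eq_jacobson_general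
    {R M : Type*} [CommRing R] [AddCommGroup M] [Module R M]
    [Module.Finite R M] (hns : ¬ IsSimpleModule R M)
    (m : M) :
    letI B : Set (Set M) := {S | ∃ (x : M) (N : Submodule R M),
      N ≠ ⊥ ∧ N ⊔ Submodule.span R {x} = ⊤ ∧ S = x +ᵥ (N : Set M)}
    letI t : TopologicalSpace M := TopologicalSpace.generateFrom B
    ((∀ U : Set M, t.IsOpen U → m ∈ U → U = Set.univ) ↔
      m ∈ sInf {P : Submodule R M | IsCoatom P}) := by
  change _ ↔ m ∈ Module.jacobson R M
  exact TopologicalSpace.forall_isOpen_generateFrom_eq_univ_iff.trans ⟨Submodule.mem_jacobson_of_forall_coprimeCosets hns,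
    fun hm _ ↦ Submodule.eq_univ_of_mem_coprimeCosets hm⟩

/-- In the Golomb topology `G̃(M)` of a finitely generated meet irreducible module
satisfying the finite coprime condition and not simple, a point is indiscrete
iff it lies in the Jacobson radical `J(M)`. -/
theorem indiscrete_points_eq_jacobson
    {R M : Type*} [CommRing R] [AddCommGroup M] [Module R M] [Nontrivial M]
    [Module.Finite R M] (hns : ¬ IsSimpleModule R M)
    (hmi : ∀ K L : Submodule R M, K ≠ ⊥ → L ≠ ⊥ → K ⊓ L ≠ ⊥)
    (hfcc : ∀ N K₁ K₂ : Submodule R M, N ⊔ K₁ = ⊤ → N ⊔ K₂ = ⊤ → N ⊔ (K₁ ⊓ K₂) = ⊤)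
    (m : M) :
    letI B : Set (Set M) := {S | ∃ (x : M) (N : Submodule R M),
      N ≠ ⊥ ∧ N ⊔ Submodule.span R {x} = ⊤ ∧ S = x +ᵥ (N : Set M)}
    letI t : TopologicalSpace M := TopologicalSpace.generateFrom B
    ((∀ U : Set M, t.IsOpen U → m ∈ U → U = Set.univ) ↔
      m ∈ sInf {P : Submodule R M | IsCoatom P}) :=
  indiscrete_points_eq_jacobson_general hns m
end

section
/- The Z-module Z/8Z equipped with the topology G̃(M) = {∅, Z/8Z, {1,3,5,7}, {1,5}, {3,7}} is not a topological abelian group: the addition map μ : M × M → M is not continuous, since μ⁻¹({1,5}) is not open in the product topology. -/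
open TopologicalSpace

theorem specializes_generateFrom_iff {α : Type*} {g : Set (Set α)} {x y : α} :
    @Specializes α (generateFrom g) x y ↔ ∀ s ∈ g, y ∈ s → x ∈ s := by
  let := generateFrom g
  rw [specializes_iff_pure, ← Filter.tendsto_id']
  exact tendsto_nhds_generateFrom_iff

/-- `ℤ/8ℤ` with the Golomb topology `{∅, ℤ/8ℤ, {1,3,5,7}, {1,5}, {3,7}}` is not a
topological abelian group: the preimage of `{1,5}` under addition is not open in
the product topology, hence addition is not continuous. -/
theorem zmod8_golomb_not_topological_group :
    letI t : TopologicalSpace (ZMod 8) := TopologicalSpace.generateFrom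
      {∅, Set.univ, {1, 3, 5, 7}, {1, 5}, {3, 7}}
    letI tp : TopologicalSpace (ZMod 8 × ZMod 8) := @instTopologicalSpaceProd _ _ t t
    ¬ tp.IsOpen ((fun p : ZMod 8 × ZMod 8 => p.1 + p.2) ⁻¹' ({1, 5} : Set (ZMod 8))) ∧
    ¬ @Continuous (ZMod 8 × ZMod 8) (ZMod 8) tp t (fun p => p.1 + p.2) := by
  let : TopologicalSpace (ZMod 8) := generateFrom {∅, Set.univ, {1, 3, 5, 7}, {1, 5}, {3, 7}}
  -- no basic open set separates 0 from 2, so every open set around (0, 1) contains (2, 1),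
  -- whose sum 3 is not in {1, 5}
  have h20 : (2 : ZMod 8) ⤳ 0 := specializes_generateFrom_iff.2 (by simp; decide)
  have h21 : ((2, 1) : ZMod 8 × ZMod 8) ⤳ (0, 1) := h20.prod specializes_rfl
  have hnot : ¬ IsOpen ((fun p : ZMod 8 × ZMod 8 => p.1 + p.2) ⁻¹' ({1, 5} : Set (ZMod 8))) :=
    fun hopen => absurd (h21.mem_open hopen (by simp)) (by simp; decide)
  exact ⟨hnot, fun hc => hnot (hc.isOpen_preimage _ (isOpen_generateFrom_of_mem (by simp)))⟩
end

section
/- Let M be a finitely generated meet irreducible μ-module satisfying the finite coprime condition, equipped with the topology G̃(M) generated by B_M. Then for every submodule N of M and every m ∈ M, J(N) ⊆ closure(m + N) in G̃(M), where J(N) is the intersection of all maximal submodules of M containing N. -/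
/-!
A point `x` of `J(N)` lies in every maximal submodule containing `N`, so any submodule `P`
with `Rx + P = M` already satisfies `N + P = M`: otherwise `N + P` would lie in a maximal
submodule, which then contains both `x` and `P` (maximal submodules exist because `M` is
finitely generated). By the finite coprime condition, the submodules `P` with `Rx + P = M` are
closed under finite intersections, so every open neighbourhood of `x` contains such a coset
`x + P`. Writing `x - m = n + p` with `n ∈ N`, `p ∈ P` shows that `x - p` lies in
`(x + P) ∩ (m + N)`.
-/

open Pointwise Submodule

section Cosets

variable {R M : Type*} [Ring R] [AddCommGroup M] [Module R M]

theorem Submodule.mem_vadd_coe_iff_sub_mem {P : Submodule R M} {x y : M} :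
    x ∈ y +ᵥ (P : Set M) ↔ x - y ∈ P := by
  rw [Set.mem_vadd_set_iff_neg_vadd_mem, vadd_eq_add, neg_add_eq_sub, SetLike.mem_coe]

theorem Submodule.vadd_coe_eq_of_mem_vadd_coe {P : Submodule R M} {x y : M}
    (h : x ∈ y +ᵥ (P : Set M)) : x +ᵥ (P : Set M) = y +ᵥ (P : Set M) :=
  vadd_set_eq_vadd_set_iff.mpr (SModEq.sub_mem.mpr (mem_vadd_coe_iff_sub_mem.mp h))

theorem Submodule.span_singleton_sup_le_of_sub_mem {P : Submodule R M} {x y : M}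
    (h : x - y ∈ P) : span R {x} ⊔ P ≤ span R {y} ⊔ P := by
  refine sup_le ((span_singleton_le_iff_mem _ _).mpr ?_) le_sup_right
  rw [← sub_add_cancel x y]
  exact add_mem (mem_sup_right h) (mem_sup_left (mem_span_singleton_self y))

theorem Submodule.vadd_coe_inter_vadd_coe_nonempty {P N : Submodule R M} {x y : M}
    (h : x - y ∈ P ⊔ N) : ((x +ᵥ (P : Set M)) ∩ (y +ᵥ (N : Set M))).Nonempty := by
  obtain ⟨p, hp, n, hn, hpn⟩ := mem_sup.mp h
  refine ⟨x - p, mem_vadd_coe_iff_sub_mem.mpr ?_, mem_vadd_coe_iff_sub_mem.mpr ?_⟩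
  · simpa using neg_mem hp
  · rwa [sub_right_comm, ← hpn, add_sub_cancel_left]

end Cosets

theorem Submodule.sup_eq_top_of_mem_sInf_coatoms {R M : Type*} [Semiring R] [AddCommMonoid M]
    [Module R M] [IsCoatomic (Submodule R M)] {N P : Submodule R M} {x : M}
    (hx : x ∈ sInf {Q : Submodule R M | IsCoatom Q ∧ N ≤ Q}) (hP : span R {x} ⊔ P = ⊤) :
    N ⊔ P = ⊤ := by
  by_contra hNP
  obtain ⟨Q, hQ, hNPQ⟩ := (eq_top_or_exists_le_coatom (N ⊔ P)).resolve_left hNP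
  have hxQ : x ∈ Q := mem_sInf.mp hx Q ⟨hQ, le_sup_left.trans hNPQ⟩
  refine hQ.1 (top_le_iff.mp ?_)
  rw [← hP]
  exact sup_le ((span_singleton_le_iff_mem _ _).mpr hxQ) (le_sup_right.trans hNPQ)

section GolombTopology

variable (R M : Type*) [Ring R] [AddCommGroup M] [Module R M]

def golombBasis : Set (Set M) :=
  {S | ∃ (x : M) (P : Submodule R M), P ≠ ⊥ ∧ P ⊔ span R {x} = ⊤ ∧ S = x +ᵥ (P : Set M)}

variable {R M}

theorem exists_comaximal_vadd_subset_of_generateOpen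
    (hfcc : ∀ N K₁ K₂ : Submodule R M, N ⊔ K₁ = ⊤ → N ⊔ K₂ = ⊤ → N ⊔ (K₁ ⊓ K₂) = ⊤)
    {o : Set M} (ho : TopologicalSpace.GenerateOpen (golombBasis R M) o) {x : M} (hx : x ∈ o) :
    ∃ P : Submodule R M, span R {x} ⊔ P = ⊤ ∧ x +ᵥ (P : Set M) ⊆ o := by
  induction ho with
  | basic s hs =>
    obtain ⟨y, P, -, hPy, rfl⟩ := hs
    refine ⟨P, top_le_iff.mp ?_, (vadd_coe_eq_of_mem_vadd_coe hx).subset⟩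
    rw [← hPy, sup_comm]
    refine span_singleton_sup_le_of_sub_mem ?_
    rw [← neg_sub]
    exact neg_mem (mem_vadd_coe_iff_sub_mem.mp hx)
  | univ => exact ⟨⊤, sup_top_eq _, Set.subset_univ _⟩
  | inter s₁ s₂ _ _ ih₁ ih₂ =>
    obtain ⟨P₁, hP₁, hs₁⟩ := ih₁ hx.1
    obtain ⟨P₂, hP₂, hs₂⟩ := ih₂ hx.2
    refine ⟨P₁ ⊓ P₂, hfcc _ _ _ hP₁ hP₂, Set.subset_inter ?_ ?_⟩
    · exact (Set.vadd_set_mono inf_le_left).trans hs₁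
    · exact (Set.vadd_set_mono inf_le_right).trans hs₂
  | sUnion S _ ih =>
    obtain ⟨s, hsS, hxs⟩ := hx
    obtain ⟨P, hP, hsub⟩ := ih s hsS hxs
    exact ⟨P, hP, hsub.trans (Set.subset_sUnion_of_mem hsS)⟩

end GolombTopology

theorem jacobson_subset_closure_coset_general
    {R M : Type*} [CommRing R] [AddCommGroup M] [Module R M]
    [Module.Finite R M]
    (hfcc : ∀ N K₁ K₂ : Submodule R M, N ⊔ K₁ = ⊤ → N ⊔ K₂ = ⊤ → N ⊔ (K₁ ⊓ K₂) = ⊤)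
    (N : Submodule R M) (m : M) :
    letI B : Set (Set M) := {S | ∃ (x : M) (P : Submodule R M),
      P ≠ ⊥ ∧ P ⊔ Submodule.span R {x} = ⊤ ∧ S = x +ᵥ (P : Set M)}
    letI t : TopologicalSpace M := TopologicalSpace.generateFrom B
    ((sInf {P : Submodule R M | IsCoatom P ∧ N ≤ P} : Submodule R M) : Set M) ⊆
      @closure M t (m +ᵥ (N : Set M)) := by
  let : TopologicalSpace M := .generateFrom (golombBasis R M)
  intro x hx
  refine _root_.mem_closure_iff.mpr fun o ho hxo ↦ ?_
  obtain ⟨P, hxP, hPo⟩ := exists_comaximal_vadd_subset_of_generateOpen hfcc ho hxo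
  have hNP : P ⊔ N = ⊤ := sup_comm N P ▸ sup_eq_top_of_mem_sInf_coatoms hx hxP
  exact (vadd_coe_inter_vadd_coe_nonempty (hNP ▸ mem_top : x - m ∈ P ⊔ N)).mono
    (Set.inter_subset_inter_left _ hPo)

/-- In the Golomb topology of a finitely generated meet irreducible μ-module
satisfying the finite coprime condition, `J(N) ⊆ closure (m + N)` for every
submodule `N` and every `m ∈ M`. -/
theorem jacobson_subset_closure_coset
    {R M : Type*} [CommRing R] [AddCommGroup M] [Module R M] [Nontrivial M]
    [Module.Finite R M]
    (hmi : ∀ K L : Submodule R M, K ≠ ⊥ → L ≠ ⊥ → K ⊓ L ≠ ⊥)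
    (hfcc : ∀ N K₁ K₂ : Submodule R M, N ⊔ K₁ = ⊤ → N ⊔ K₂ = ⊤ → N ⊔ (K₁ ⊓ K₂) = ⊤)
    (hmu : ∀ N K : Submodule R M, (N ⊔ K).colon ⊤ = N.colon ⊤ ⊔ K.colon ⊤)
    (N : Submodule R M) (m : M) :
    letI B : Set (Set M) := {S | ∃ (x : M) (P : Submodule R M),
      P ≠ ⊥ ∧ P ⊔ Submodule.span R {x} = ⊤ ∧ S = x +ᵥ (P : Set M)}
    letI t : TopologicalSpace M := TopologicalSpace.generateFrom B
    ((sInf {P : Submodule R M | IsCoatom P ∧ N ≤ P} : Submodule R M) : Set M) ⊆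
      @closure M t (m +ᵥ (N : Set M)) :=
  jacobson_subset_closure_coset_general hfcc N m
end

section
/- Let M be a multiplication R-module whose annihilator ann(M) is a prime ideal of R. Then M is meet irreducible: the intersection of any two nonzero submodules of M is nonzero. -/
namespace Submodule

variable {R M : Type*} [CommSemiring R] [AddCommMonoid M] [Module R M]

lemma smul_top_le_iff_le_colon {I : Ideal R} {N : Submodule R M} :
    I • (⊤ : Submodule R M) ≤ N ↔ I ≤ N.colon ⊤ := by
  rw [smul_le]
  exact ⟨fun h r hr ↦ mem_colon.2 fun m _ ↦ h r hr m mem_top,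
    fun h r hr m _ ↦ mem_colon.1 (h hr) m trivial⟩

lemma colon_mul_colon_le_colon_inf (N P : Submodule R M) (S : Set M) :
    N.colon S * P.colon S ≤ (N ⊓ P).colon S := by
  rw [inf_colon]
  exact Ideal.mul_le_inf

lemma le_of_colon_top_le {N P : Submodule R M} (hN : N = N.colon ⊤ • (⊤ : Submodule R M))
    (h : N.colon ⊤ ≤ P.colon ⊤) : N ≤ P :=
  hN ▸ smul_top_le_iff_le_colon.2 h

end Submodule

open Submodule in
theorem multiplication_ann_prime_meet_irreducible_general
    {R M : Type*} [CommRing R] [AddCommGroup M] [Module R M]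
    (hmul : ∀ N : Submodule R M, N = (N.colon ⊤) • (⊤ : Submodule R M))
    (hp : ((⊥ : Submodule R M).colon ⊤).IsPrime) :
    ∀ K L : Submodule R M, K ≠ ⊥ → L ≠ ⊥ → K ⊓ L ≠ ⊥ := by
  intro K L hK hL hKL
  have hmul_le_ann : K.colon ⊤ * L.colon ⊤ ≤ (⊥ : Submodule R M).colon ⊤ :=
    hKL ▸ colon_mul_colon_le_colon_inf K L ⊤
  rcases hp.mul_le.1 hmul_le_ann with hKann | hLann
  · exact hK (le_bot_iff.1 (le_of_colon_top_le (hmul K) hKann))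
  · exact hL (le_bot_iff.1 (le_of_colon_top_le (hmul L) hLann))

/-- A multiplication module whose annihilator is a prime ideal is meet
irreducible. -/
theorem multiplication_ann_prime_meet_irreducible
    {R M : Type*} [CommRing R] [AddCommGroup M] [Module R M] [Nontrivial M]
    (hmul : ∀ N : Submodule R M, N = (N.colon ⊤) • (⊤ : Submodule R M))
    (hp : ((⊥ : Submodule R M).colon ⊤).IsPrime) :
    ∀ K L : Submodule R M, K ≠ ⊥ → L ≠ ⊥ → K ⊓ L ≠ ⊥ :=
  multiplication_ann_prime_meet_irreducible_general hmul hp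
end
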